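/- For the non-autonomous electrodynamics Hamiltonian H = h_{ab} g^{ij} p_i^a p_j^b + U^{(i)}_{(a)} p_i^a + F with g independent of momenta, the general spatial nonlinear connection formula N^{(a)}_{(i)j} = (h^{ab}/4)[∂g_{ij}/∂x^k · ∂H/∂p_k^b − ∂g_{ij}/∂p_k^b · ∂H/∂x^k + g_{ik} ∂²H/∂x^j∂p_k^b + g_{jk} ∂²H/∂x^i∂p_k^b] evaluates to N^{(a)}_{(i)j} = −Γ^k_{ij} p_k^a + T^{(a)}_{(i)j}, where T^{(a)}_{(i)j} = (h^{ab}/4)(U_{ib•j} + U_{jb•i}), U_{ib} = g_{ik}U^{(k)}_{(b)}, and U_{kb•r} = ∂U_{kb}/∂x^r − U_{sb}Γ^s_{kr}. -/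

import Mathlib

variable {n m : ℕ}

local notation "P" => (Fin n → ℝ) × (Fin n → Fin m → ℝ)
variable {E : Type*} [NormedAddCommGroup E] [NormedSpace ℝ E]

lemma fderiv_mul_apply' {f g : E → ℝ} {x : E} {v : E} (hf : DifferentiableAt ℝ f x)
    (hg : DifferentiableAt ℝ g x) :
    fderiv ℝ (fun y => f y * g y) x v = fderiv ℝ f x v * g x + f x * fderiv ℝ g x v := by
  rw [fderiv_fun_mul hf hg]; simp; ring

lemma fderiv_sum_apply' {ι : Type*} (s : Finset ι) {f : ι → E → ℝ} {x v : E}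
    (hf : ∀ i ∈ s, DifferentiableAt ℝ (f i) x) :
    fderiv ℝ (fun y => ∑ i ∈ s, f i y) x v = ∑ i ∈ s, fderiv ℝ (f i) x v := by
  rw [fderiv_fun_sum hf]; simp

lemma contDiff_det' {nn N : ℕ} (M : (Fin nn → ℝ) → Matrix (Fin N) (Fin N) ℝ)
    (hM : ∀ i j, ContDiff ℝ (⊤ : ℕ∞) fun y => M y i j) :
    ContDiff ℝ (⊤ : ℕ∞) fun y => (M y).det := by
  have : (fun y => (M y).det)
      = fun y => ∑ σ : Equiv.Perm (Fin N), (Equiv.Perm.sign σ : ℤ) * ∏ k, M y (σ k) k := by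
    funext y; rw [Matrix.det_apply']
  rw [this]
  exact ContDiff.sum fun σ _ => ContDiff.mul contDiff_const
    (contDiff_prod fun k _ => hM _ _)

lemma contDiff_ginv {nn n' : ℕ} (g : (Fin nn → ℝ) → Matrix (Fin n') (Fin n') ℝ)
    (hg : ∀ i j, ContDiff ℝ (⊤ : ℕ∞) (fun x => g x i j)) (hginv : ∀ x, IsUnit (g x).det)
    (i j : Fin n') : ContDiff ℝ (⊤ : ℕ∞) fun y => (g y)⁻¹ i j := by
  have hd : ContDiff ℝ (⊤ : ℕ∞) fun y => (g y).det := contDiff_det' g hg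
  have ha : ContDiff ℝ (⊤ : ℕ∞) fun y => (g y).adjugate i j := by
    have : (fun y => (g y).adjugate i j) = fun y => ((g y).updateRow j (Pi.single i 1)).det := by
      funext y; rw [Matrix.adjugate_apply]
    rw [this]
    refine contDiff_det' _ fun r s => ?_
    rcases eq_or_ne r j with rfl | hr
    · simp [Matrix.updateRow_apply]
      exact contDiff_const
    · simp [Matrix.updateRow_apply, hr]
      exact hg r s
  have : (fun y => (g y)⁻¹ i j) = fun y => ((g y).det)⁻¹ * (g y).adjugate i j := by
    funext y; rw [Matrix.inv_def]; simp [Ring.inverse_eq_inv']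
  rw [this]
  exact ContDiff.mul (hd.inv fun y => (hginv y).ne_zero) ha

lemma fderiv_ginv' {nn n' : ℕ} (g : (Fin nn → ℝ) → Matrix (Fin n') (Fin n') ℝ)
    (hg : ∀ i j, ContDiff ℝ (⊤ : ℕ∞) (fun x => g x i j)) (hginv : ∀ x, IsUnit (g x).det)
    (x v : Fin nn → ℝ) (i j : Fin n') :
    fderiv ℝ (fun y => (g y)⁻¹ i j) x v
      = -∑ r, ∑ s, (g x)⁻¹ i r * fderiv ℝ (fun y => g y r s) x v * (g x)⁻¹ s j := by
  have hNd : ∀ r s, DifferentiableAt ℝ (fun y => (g y)⁻¹ r s) x := fun r s =>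
    ((contDiff_ginv g hg hginv r s).differentiable (by simp)).differentiableAt
  have hgd : ∀ r s, DifferentiableAt ℝ (fun y => g y r s) x := fun r s =>
    ((hg r s).differentiable (by simp)).differentiableAt
  -- key: for each s, derivative of ∑ r, N i r * g r s is zero
  have key : ∀ s, ∑ r, (fderiv ℝ (fun y => (g y)⁻¹ i r) x v * g x r s
      + (g x)⁻¹ i r * fderiv ℝ (fun y => g y r s) x v) = 0 := by
    intro s
    have hconst : (fun y => ∑ r, (g y)⁻¹ i r * g y r s)
        = fun _ => (1 : Matrix (Fin n') (Fin n') ℝ) i s := by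
      funext y
      rw [← Matrix.mul_apply, Matrix.nonsing_inv_mul _ (hginv y)]
    have h0 : fderiv ℝ (fun y => ∑ r, (g y)⁻¹ i r * g y r s) x v = 0 := by
      rw [hconst]; simp
    rw [fderiv_sum_apply' _ (fun r _ => ((hNd i r).fun_mul (hgd r s)))] at h0
    rw [← h0]
    exact Finset.sum_congr rfl fun r _ => (fderiv_mul_apply' (hNd i r) (hgd r s)).symm
  have keyA : ∀ s, ∑ r, fderiv ℝ (fun y => (g y)⁻¹ i r) x v * g x r s
      = -∑ r, (g x)⁻¹ i r * fderiv ℝ (fun y => g y r s) x v := by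
    intro s
    have := key s
    rw [Finset.sum_add_distrib] at this
    linarith [this]
  -- now recover D(N i j)
  have recov : fderiv ℝ (fun y => (g y)⁻¹ i j) x v
      = ∑ s, (∑ r, fderiv ℝ (fun y => (g y)⁻¹ i r) x v * g x r s) * (g x)⁻¹ s j := by
    have : ∀ r : Fin n', ∑ s, g x r s * (g x)⁻¹ s j = if r = j then 1 else 0 := by
      intro r
      rw [← Matrix.mul_apply, Matrix.mul_nonsing_inv _ (hginv x), Matrix.one_apply]
    calc fderiv ℝ (fun y => (g y)⁻¹ i j) x v
        = ∑ r, fderiv ℝ (fun y => (g y)⁻¹ i r) x v * (if r = j then 1 else 0) := by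
          rw [Finset.sum_eq_single j] <;> simp_all
      _ = ∑ r, ∑ s, fderiv ℝ (fun y => (g y)⁻¹ i r) x v * (g x r s * (g x)⁻¹ s j) := by
          refine Finset.sum_congr rfl fun r _ => ?_
          rw [← Finset.mul_sum, this r]
      _ = ∑ s, (∑ r, fderiv ℝ (fun y => (g y)⁻¹ i r) x v * g x r s) * (g x)⁻¹ s j := by
          rw [Finset.sum_comm]
          refine Finset.sum_congr rfl fun s _ => ?_
          rw [Finset.sum_mul]
          refine Finset.sum_congr rfl fun r _ => by ring
  rw [recov]
  rw [show -∑ r, ∑ s, (g x)⁻¹ i r * fderiv ℝ (fun y => g y r s) x v * (g x)⁻¹ s j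
      = ∑ s, (-∑ r, (g x)⁻¹ i r * fderiv ℝ (fun y => g y r s) x v) * (g x)⁻¹ s j by
    simp only [Finset.sum_neg_distrib, neg_mul, Finset.sum_mul, neg_inj]
    rw [Finset.sum_comm]]
  exact Finset.sum_congr rfl fun s _ => by rw [keyA s]

lemma diffA {φ : (Fin n → ℝ) → ℝ} {x : Fin n → ℝ} {p : Fin n → Fin m → ℝ}
    (hφ : DifferentiableAt ℝ φ x) :
    DifferentiableAt ℝ (fun q : P => φ q.1) (x, p) :=
  hφ.comp (x, p) differentiableAt_fst

lemma fdA {φ : (Fin n → ℝ) → ℝ} {x : Fin n → ℝ} {p : Fin n → Fin m → ℝ}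
    (hφ : DifferentiableAt ℝ φ x) (v : P) :
    fderiv ℝ (fun q : P => φ q.1) (x, p) v = fderiv ℝ φ x v.1 := by
  have : (fun q : P => φ q.1) = φ ∘ Prod.fst := rfl
  rw [this, fderiv_comp _ hφ differentiableAt_fst]
  simp [fderiv_fst]

noncomputable def sndProj (i : Fin n) (a : Fin m) : P →L[ℝ] ℝ :=
  ((ContinuousLinearMap.proj a).comp ((ContinuousLinearMap.proj i).comp
    (ContinuousLinearMap.snd ℝ (Fin n → ℝ) (Fin n → Fin m → ℝ))))

lemma sndProj_apply (i : Fin n) (a : Fin m) (q : P) : sndProj i a q = q.2 i a := rfl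

lemma diffB2 (i : Fin n) (a : Fin m) (q : P) :
    DifferentiableAt ℝ (fun q : P => q.2 i a) q :=
  (sndProj i a).differentiableAt

lemma fdB2 (i : Fin n) (a : Fin m) (q v : P) :
    fderiv ℝ (fun q : P => q.2 i a) q v = v.2 i a := by
  have : (fun q : P => q.2 i a) = ⇑(sndProj i a) := rfl
  rw [this, ContinuousLinearMap.fderiv]
  rfl

lemma diffB {φ : (Fin n → ℝ) → ℝ} {x : Fin n → ℝ} {p : Fin n → Fin m → ℝ}
    (hφ : DifferentiableAt ℝ φ x) (r : Fin n) (s : Fin m) :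
    DifferentiableAt ℝ (fun q : P => φ q.1 * q.2 r s) (x, p) :=
  (diffA hφ).mul (diffB2 r s _)

lemma fderiv_mul_apply'' {E : Type*} [NormedAddCommGroup E] [NormedSpace ℝ E]
    {f g : E → ℝ} {x : E} {v : E} (hf : DifferentiableAt ℝ f x)
    (hg : DifferentiableAt ℝ g x) :
    fderiv ℝ (fun y => f y * g y) x v = fderiv ℝ f x v * g x + f x * fderiv ℝ g x v := by
  rw [fderiv_fun_mul hf hg]; simp; ring

lemma fdB {φ : (Fin n → ℝ) → ℝ} {x : Fin n → ℝ} {p : Fin n → Fin m → ℝ}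
    (hφ : DifferentiableAt ℝ φ x) (r : Fin n) (s : Fin m) (v : P) :
    fderiv ℝ (fun q : P => φ q.1 * q.2 r s) (x, p) v
      = fderiv ℝ φ x v.1 * p r s + φ x * v.2 r s := by
  rw [fderiv_mul_apply'' (diffA hφ) (diffB2 r s _), fdA hφ, fdB2]

lemma diffC {φ : (Fin n → ℝ) → ℝ} {x : Fin n → ℝ} {p : Fin n → Fin m → ℝ}
    (hφ : DifferentiableAt ℝ φ x) (r : Fin n) (s : Fin m) (r' : Fin n) (s' : Fin m) :
    DifferentiableAt ℝ (fun q : P => φ q.1 * q.2 r s * q.2 r' s') (x, p) :=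
  ((diffA hφ).mul (diffB2 r s _)).mul (diffB2 r' s' _)

lemma fdC {φ : (Fin n → ℝ) → ℝ} {x : Fin n → ℝ} {p : Fin n → Fin m → ℝ}
    (hφ : DifferentiableAt ℝ φ x) (r : Fin n) (s : Fin m) (r' : Fin n) (s' : Fin m) (v : P) :
    fderiv ℝ (fun q : P => φ q.1 * q.2 r s * q.2 r' s') (x, p) v
      = fderiv ℝ φ x v.1 * p r s * p r' s' + φ x * v.2 r s * p r' s'
        + φ x * p r s * v.2 r' s' := by
  rw [fderiv_mul_apply'' (diffB hφ r s) (diffB2 r' s' _), fdB hφ r s, fdB2]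
  ring

lemma fderiv_add_apply'' {E : Type*} [NormedAddCommGroup E] [NormedSpace ℝ E]
    {f g : E → ℝ} {x v : E} (hf : DifferentiableAt ℝ f x) (hg : DifferentiableAt ℝ g x) :
    fderiv ℝ (fun y => f y + g y) x v = fderiv ℝ f x v + fderiv ℝ g x v := by
  rw [fderiv_fun_add hf hg]; simp

lemma fderiv_sum_app {E : Type*} [NormedAddCommGroup E] [NormedSpace ℝ E]
    {ι : Type*} [Fintype ι] {f : ι → E → ℝ} {x v : E}
    (hf : ∀ i, DifferentiableAt ℝ (f i) x) :
    fderiv ℝ (fun y => ∑ i, f i y) x v = ∑ i, fderiv ℝ (f i) x v := by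
  rw [fderiv_fun_sum fun i _ => hf i]; simp

lemma DH_apply (h : Matrix (Fin m) (Fin m) ℝ)
    (g : (Fin n → ℝ) → Matrix (Fin n) (Fin n) ℝ)
    (hg : ∀ i j, ContDiff ℝ (⊤ : ℕ∞) (fun x => g x i j)) (hginv : ∀ x, IsUnit (g x).det)
    (U : (Fin n → ℝ) → Fin n → Fin m → ℝ) (hU : ∀ i a, ContDiff ℝ (⊤ : ℕ∞) (fun x => U x i a))
    (F : (Fin n → ℝ) → ℝ) (hF : ContDiff ℝ (⊤ : ℕ∞) F)
    (H : P → ℝ)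
    (hH : ∀ q, H q = (∑ a, ∑ b, ∑ i, ∑ j, h a b * (g q.1)⁻¹ i j * q.2 i a * q.2 j b)
      + (∑ i, ∑ a, U q.1 i a * q.2 i a) + F q.1)
    (x : Fin n → ℝ) (p : Fin n → Fin m → ℝ) (v : P) :
    fderiv ℝ H (x, p) v =
      (∑ a', ∑ b', ∑ i', ∑ j',
        ((h a' b' * fderiv ℝ (fun y => (g y)⁻¹ i' j') x v.1) * p i' a' * p j' b'
          + (h a' b' * (g x)⁻¹ i' j') * v.2 i' a' * p j' b'
          + (h a' b' * (g x)⁻¹ i' j') * p i' a' * v.2 j' b'))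
      + (∑ i', ∑ a', (fderiv ℝ (fun y => U y i' a') x v.1 * p i' a' + U x i' a' * v.2 i' a'))
      + fderiv ℝ F x v.1 := by
  have hgi : ∀ i j, DifferentiableAt ℝ (fun y => (g y)⁻¹ i j) x := fun i j =>
    ((contDiff_ginv g hg hginv i j).differentiable (by simp)).differentiableAt
  have hUd : ∀ i a, DifferentiableAt ℝ (fun y => U y i a) x := fun i a =>
    ((hU i a).differentiable (by simp)).differentiableAt
  have hFd : DifferentiableAt ℝ F x := (hF.differentiable (by simp)).differentiableAt
  have hφ : ∀ (a' b' : Fin m) (i' j' : Fin n),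
      DifferentiableAt ℝ (fun y => h a' b' * (g y)⁻¹ i' j') x := fun a' b' i' j' =>
    (differentiableAt_const _).mul (hgi i' j')
  have dAt : ∀ (a' b' : Fin m) (i' j' : Fin n), DifferentiableAt ℝ
      (fun q : P => h a' b' * (g q.1)⁻¹ i' j' * q.2 i' a' * q.2 j' b') (x, p) :=
    fun a' b' i' j' => diffC (hφ a' b' i' j') i' a' j' b'
  have dBt : ∀ (i' : Fin n) (a' : Fin m), DifferentiableAt ℝ
      (fun q : P => U q.1 i' a' * q.2 i' a') (x, p) :=
    fun i' a' => diffB (hUd i' a') i' a'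
  have dB1 : DifferentiableAt ℝ
      (fun q : P => ∑ a', ∑ b', ∑ i', ∑ j',
        h a' b' * (g q.1)⁻¹ i' j' * q.2 i' a' * q.2 j' b') (x, p) :=
    DifferentiableAt.fun_sum fun a' _ => DifferentiableAt.fun_sum fun b' _ =>
      DifferentiableAt.fun_sum fun i' _ => DifferentiableAt.fun_sum fun j' _ => dAt a' b' i' j'
  have dB2 : DifferentiableAt ℝ
      (fun q : P => ∑ i', ∑ a', U q.1 i' a' * q.2 i' a') (x, p) :=
    DifferentiableAt.fun_sum fun i' _ => DifferentiableAt.fun_sum fun a' _ => dBt i' a'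
  have dB3 : DifferentiableAt ℝ (fun q : P => F q.1) (x, p) := diffA hFd
  have hHeq : H = fun q : P =>
      ((∑ a, ∑ b, ∑ i, ∑ j, h a b * (g q.1)⁻¹ i j * q.2 i a * q.2 j b)
        + (∑ i, ∑ a, U q.1 i a * q.2 i a)) + F q.1 := by
    funext q; rw [hH q]
  rw [hHeq]
  have e0 := fderiv_add_apply'' (E := P) (x := (x,p)) (v := v) (dB1.fun_add dB2) dB3
  rw [e0]
  have e1 := fderiv_add_apply'' (E := P) (x := (x,p)) (v := v) dB1 dB2
  rw [e1]
  have eA : fderiv ℝ (fun q : P => ∑ a', ∑ b', ∑ i', ∑ j',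
      h a' b' * (g q.1)⁻¹ i' j' * q.2 i' a' * q.2 j' b') (x, p) v
      = ∑ a', ∑ b', ∑ i', ∑ j',
        ((h a' b' * fderiv ℝ (fun y => (g y)⁻¹ i' j') x v.1) * p i' a' * p j' b'
          + (h a' b' * (g x)⁻¹ i' j') * v.2 i' a' * p j' b'
          + (h a' b' * (g x)⁻¹ i' j') * p i' a' * v.2 j' b') := by
    rw [fderiv_sum_app fun a' => DifferentiableAt.fun_sum fun b' _ =>
      DifferentiableAt.fun_sum fun i' _ => DifferentiableAt.fun_sum fun j' _ => dAt a' b' i' j']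
    refine Finset.sum_congr rfl fun a' _ => ?_
    rw [fderiv_sum_app fun b' => DifferentiableAt.fun_sum fun i' _ =>
      DifferentiableAt.fun_sum fun j' _ => dAt a' b' i' j']
    refine Finset.sum_congr rfl fun b' _ => ?_
    rw [fderiv_sum_app fun i' => DifferentiableAt.fun_sum fun j' _ => dAt a' b' i' j']
    refine Finset.sum_congr rfl fun i' _ => ?_
    rw [fderiv_sum_app fun j' => dAt a' b' i' j']
    refine Finset.sum_congr rfl fun j' _ => ?_
    have := fdC (p := p) (hφ a' b' i' j') i' a' j' b' v
    rw [this]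
    have hc : fderiv ℝ (fun y => h a' b' * (g y)⁻¹ i' j') x v.1
        = h a' b' * fderiv ℝ (fun y => (g y)⁻¹ i' j') x v.1 := by
      rw [fderiv_const_mul (hgi i' j')]; simp
    rw [hc]
  have eB : fderiv ℝ (fun q : P => ∑ i', ∑ a', U q.1 i' a' * q.2 i' a') (x, p) v
      = ∑ i', ∑ a', (fderiv ℝ (fun y => U y i' a') x v.1 * p i' a' + U x i' a' * v.2 i' a') := by
    rw [fderiv_sum_app fun i' => DifferentiableAt.fun_sum fun a' _ => dBt i' a']
    refine Finset.sum_congr rfl fun i' _ => ?_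
    rw [fderiv_sum_app fun a' => dBt i' a']
    exact Finset.sum_congr rfl fun a' _ => fdB (hUd i' a') i' a' v
  rw [eA, eB, fdA hFd]
lemma DHp (h : Matrix (Fin m) (Fin m) ℝ)
    (g : (Fin n → ℝ) → Matrix (Fin n) (Fin n) ℝ)
    (hg : ∀ i j, ContDiff ℝ (⊤ : ℕ∞) (fun x => g x i j)) (hginv : ∀ x, IsUnit (g x).det)
    (U : (Fin n → ℝ) → Fin n → Fin m → ℝ) (hU : ∀ i a, ContDiff ℝ (⊤ : ℕ∞) (fun x => U x i a))
    (F : (Fin n → ℝ) → ℝ) (hF : ContDiff ℝ (⊤ : ℕ∞) F)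
    (H : P → ℝ)
    (hH : ∀ q, H q = (∑ a, ∑ b, ∑ i, ∑ j, h a b * (g q.1)⁻¹ i j * q.2 i a * q.2 j b)
      + (∑ i, ∑ a, U q.1 i a * q.2 i a) + F q.1)
    (x : Fin n → ℝ) (p : Fin n → Fin m → ℝ) (k : Fin n) (b : Fin m) :
    fderiv ℝ H (x, p) (0, Pi.single k (Pi.single b 1)) =
      (∑ b', ∑ j', h b b' * (g x)⁻¹ k j' * p j' b')
      + (∑ a', ∑ i', h a' b * (g x)⁻¹ i' k * p i' a') + U x k b := by
  rw [DH_apply h g hg hginv U hU F hF H hH x p (0, Pi.single k (Pi.single b 1))]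
  simp [Pi.single_apply, ite_apply, mul_ite, ite_mul, Finset.sum_ite_eq, Finset.sum_ite_eq', Finset.sum_add_distrib, Finset.sum_ite_irrel, Finset.sum_const_zero]
lemma DHxp (h : Matrix (Fin m) (Fin m) ℝ)
    (g : (Fin n → ℝ) → Matrix (Fin n) (Fin n) ℝ)
    (hg : ∀ i j, ContDiff ℝ (⊤ : ℕ∞) (fun x => g x i j)) (hginv : ∀ x, IsUnit (g x).det)
    (U : (Fin n → ℝ) → Fin n → Fin m → ℝ) (hU : ∀ i a, ContDiff ℝ (⊤ : ℕ∞) (fun x => U x i a))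
    (F : (Fin n → ℝ) → ℝ) (hF : ContDiff ℝ (⊤ : ℕ∞) F)
    (H : P → ℝ)
    (hH : ∀ q, H q = (∑ a, ∑ b, ∑ i, ∑ j, h a b * (g q.1)⁻¹ i j * q.2 i a * q.2 j b)
      + (∑ i, ∑ a, U q.1 i a * q.2 i a) + F q.1)
    (x : Fin n → ℝ) (p : Fin n → Fin m → ℝ) (k : Fin n) (b : Fin m) (u : Fin n → ℝ) :
    fderiv ℝ (fun q : P => fderiv ℝ H q (0, Pi.single k (Pi.single b 1))) (x, p) (u, 0) =
      (∑ b', ∑ j', h b b' * fderiv ℝ (fun y => (g y)⁻¹ k j') x u * p j' b')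
      + (∑ a', ∑ i', h a' b * fderiv ℝ (fun y => (g y)⁻¹ i' k) x u * p i' a')
      + fderiv ℝ (fun y => U y k b) x u := by
  have hgi : ∀ x' i j, DifferentiableAt ℝ (fun y => (g y)⁻¹ i j) x' := fun x' i j =>
    ((contDiff_ginv g hg hginv i j).differentiable (by simp)).differentiableAt
  have hUd : ∀ x' i a, DifferentiableAt ℝ (fun y => U y i a) x' := fun x' i a =>
    ((hU i a).differentiable (by simp)).differentiableAt
  have hfun : (fun q : P => fderiv ℝ H q (0, Pi.single k (Pi.single b 1)))
      = fun q : P => ((∑ b', ∑ j', h b b' * (g q.1)⁻¹ k j' * q.2 j' b')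
        + (∑ a', ∑ i', h a' b * (g q.1)⁻¹ i' k * q.2 i' a')) + U q.1 k b := by
    funext q
    obtain ⟨qx, qp⟩ := q
    exact DHp h g hg hginv U hU F hF H hH qx qp k b
  rw [hfun]
  have hφ1 : ∀ (b' : Fin m) (j' : Fin n),
      DifferentiableAt ℝ (fun y => h b b' * (g y)⁻¹ k j') x := fun b' j' =>
    (differentiableAt_const _).mul (hgi x k j')
  have hφ2 : ∀ (a' : Fin m) (i' : Fin n),
      DifferentiableAt ℝ (fun y => h a' b * (g y)⁻¹ i' k) x := fun a' i' =>
    (differentiableAt_const _).mul (hgi x i' k)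
  have d1 : ∀ (b' : Fin m) (j' : Fin n), DifferentiableAt ℝ
      (fun q : P => h b b' * (g q.1)⁻¹ k j' * q.2 j' b') (x, p) := fun b' j' =>
    diffB (hφ1 b' j') j' b'
  have d2 : ∀ (a' : Fin m) (i' : Fin n), DifferentiableAt ℝ
      (fun q : P => h a' b * (g q.1)⁻¹ i' k * q.2 i' a') (x, p) := fun a' i' =>
    diffB (hφ2 a' i') i' a'
  have dS1 : DifferentiableAt ℝ
      (fun q : P => ∑ b', ∑ j', h b b' * (g q.1)⁻¹ k j' * q.2 j' b') (x, p) :=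
    DifferentiableAt.fun_sum fun b' _ => DifferentiableAt.fun_sum fun j' _ => d1 b' j'
  have dS2 : DifferentiableAt ℝ
      (fun q : P => ∑ a', ∑ i', h a' b * (g q.1)⁻¹ i' k * q.2 i' a') (x, p) :=
    DifferentiableAt.fun_sum fun a' _ => DifferentiableAt.fun_sum fun i' _ => d2 a' i'
  have dS3 : DifferentiableAt ℝ (fun q : P => U q.1 k b) (x, p) := diffA (hUd x k b)
  have e0 := fderiv_add_apply'' (E := P) (x := (x, p)) (v := ((u, 0) : P)) (dS1.fun_add dS2) dS3
  rw [e0]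
  have e1 := fderiv_add_apply'' (E := P) (x := (x, p)) (v := ((u, 0) : P)) dS1 dS2
  rw [e1]
  have eS1 : fderiv ℝ (fun q : P => ∑ b', ∑ j', h b b' * (g q.1)⁻¹ k j' * q.2 j' b') (x, p)
      ((u, 0) : P) = ∑ b', ∑ j', h b b' * fderiv ℝ (fun y => (g y)⁻¹ k j') x u * p j' b' := by
    rw [fderiv_sum_app fun b' => DifferentiableAt.fun_sum fun j' _ => d1 b' j']
    refine Finset.sum_congr rfl fun b' _ => ?_
    rw [fderiv_sum_app fun j' => d1 b' j']
    refine Finset.sum_congr rfl fun j' _ => ?_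
    have := fdB (p := p) (hφ1 b' j') j' b' ((u, 0) : P)
    rw [this]
    have hc : fderiv ℝ (fun y => h b b' * (g y)⁻¹ k j') x u
        = h b b' * fderiv ℝ (fun y => (g y)⁻¹ k j') x u := by
      rw [fderiv_const_mul (hgi x k j')]; simp
    simp [hc]
  have eS2 : fderiv ℝ (fun q : P => ∑ a', ∑ i', h a' b * (g q.1)⁻¹ i' k * q.2 i' a') (x, p)
      ((u, 0) : P) = ∑ a', ∑ i', h a' b * fderiv ℝ (fun y => (g y)⁻¹ i' k) x u * p i' a' := by
    rw [fderiv_sum_app fun a' => DifferentiableAt.fun_sum fun i' _ => d2 a' i']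
    refine Finset.sum_congr rfl fun a' _ => ?_
    rw [fderiv_sum_app fun i' => d2 a' i']
    refine Finset.sum_congr rfl fun i' _ => ?_
    have := fdB (p := p) (hφ2 a' i') i' a' ((u, 0) : P)
    rw [this]
    have hc : fderiv ℝ (fun y => h a' b * (g y)⁻¹ i' k) x u
        = h a' b * fderiv ℝ (fun y => (g y)⁻¹ i' k) x u := by
      rw [fderiv_const_mul (hgi x i' k)]; simp
    simp [hc]
  rw [eS1, eS2, fdA (hUd x k b)]


section Alg
variable {n m : ℕ}

lemma hcol (h hi : Fin m → Fin m → ℝ) (a : Fin m)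
    (hh : ∀ c, ∑ b, hi a b * h b c = (if a = c then (1:ℝ) else 0))
    (w : Fin m → ℝ) : ∑ b, hi a b * ∑ c, h b c * w c = w a := by
  calc ∑ b, hi a b * ∑ c, h b c * w c
      = ∑ b, ∑ c, hi a b * h b c * w c := by
        refine Finset.sum_congr rfl fun b _ => ?_
        rw [Finset.mul_sum]
        exact Finset.sum_congr rfl fun c _ => by ring
    _ = ∑ c, (∑ b, hi a b * h b c) * w c := by
        rw [Finset.sum_comm]
        exact Finset.sum_congr rfl fun c _ => (Finset.sum_mul _ _ _).symm
    _ = w a := by simp [hh, ite_mul]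

lemma algQuad (A B : Fin n → Fin n → ℝ) (d dB : Fin n → Fin n → Fin n → ℝ)
    (p : Fin n → Fin m → ℝ) (a : Fin m) (i j : Fin n)
    (hAB : ∀ r s, ∑ t, A r t * B t s = (if r = s then (1:ℝ) else 0))
    (hsymB : ∀ r s, B r s = B s r)
    (hsymd : ∀ k r s, d k r s = d k s r)
    (hdB : ∀ k r s, dB k r s = -∑ r', ∑ s', B r r' * d k r' s' * B s' s) :
    (1/2 : ℝ) * ∑ k, ∑ l, ((d k i j * B k l + A i k * dB j k l + A j k * dB i k l) * p l a)
      = - ∑ k, ((1/2 : ℝ) * ∑ l, B k l * (d j l i + d i l j - d l i j)) * p k a := by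
  have hAdB : ∀ (i0 r l : Fin n), ∑ k, A i0 k * dB r k l = -∑ s, d r i0 s * B s l := by
    intro i0 r l
    calc ∑ k, A i0 k * dB r k l
        = -∑ r', (∑ k, A i0 k * B k r') * (∑ s', d r r' s' * B s' l) := by
          simp only [hdB, mul_neg, Finset.sum_neg_distrib, neg_inj]
          calc ∑ k, A i0 k * ∑ r', ∑ s', B k r' * d r r' s' * B s' l
              = ∑ k, ∑ r', (A i0 k * B k r') * ∑ s', (d r r' s' * B s' l) := by
                refine Finset.sum_congr rfl fun k _ => ?_
                rw [Finset.mul_sum]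
                refine Finset.sum_congr rfl fun r' _ => ?_
                rw [Finset.mul_sum, Finset.mul_sum]
                exact Finset.sum_congr rfl fun s' _ => by ring
            _ = ∑ r', ∑ k, (A i0 k * B k r') * ∑ s', (d r r' s' * B s' l) :=
                Finset.sum_comm
            _ = ∑ r', (∑ k, A i0 k * B k r') * ∑ s', d r r' s' * B s' l := by
                refine Finset.sum_congr rfl fun r' _ => ?_
                rw [Finset.sum_mul]
      _ = -∑ s, d r i0 s * B s l := by
          simp only [hAB, ite_mul, one_mul, zero_mul]
          rw [Finset.sum_ite_eq]
          simp
  calc (1/2 : ℝ) * ∑ k, ∑ l, ((d k i j * B k l + A i k * dB j k l + A j k * dB i k l) * p l a)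
      = (1/2 : ℝ) * ∑ l, ((∑ k, d k i j * B k l) + (∑ k, A i k * dB j k l)
          + (∑ k, A j k * dB i k l)) * p l a := by
        rw [Finset.sum_comm]
        refine congrArg _ (Finset.sum_congr rfl fun l _ => ?_)
        rw [add_mul, add_mul, Finset.sum_mul, Finset.sum_mul, Finset.sum_mul,
          ← Finset.sum_add_distrib, ← Finset.sum_add_distrib]
        exact Finset.sum_congr rfl fun k _ => by ring
    _ = (1/2 : ℝ) * ∑ l, ((∑ k, d k i j * B k l) + (-∑ k, d j i k * B k l)
          + (-∑ k, d i j k * B k l)) * p l a := by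
        refine congrArg _ (Finset.sum_congr rfl fun l _ => ?_)
        rw [hAdB i j l, hAdB j i l]
    _ = - ∑ k, ((1/2 : ℝ) * ∑ l, B k l * (d j l i + d i l j - d l i j)) * p k a := by
        have hterm : ∀ l : Fin n, (∑ k, d k i j * B k l) + (-∑ k, d j i k * B k l)
            + (-∑ k, d i j k * B k l) = -∑ k, B l k * (d j k i + d i k j - d k i j) := by
          intro l
          rw [← Finset.sum_neg_distrib, ← Finset.sum_neg_distrib, ← Finset.sum_add_distrib,
            ← Finset.sum_add_distrib, ← Finset.sum_neg_distrib]
          refine Finset.sum_congr rfl fun k _ => ?_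
          rw [hsymB l k, hsymd j k i, hsymd i k j]
          ring
        rw [Finset.mul_sum, ← Finset.sum_neg_distrib]
        refine Finset.sum_congr rfl fun l _ => ?_
        rw [hterm l]
        ring
lemma algLin (A B : Fin n → Fin n → ℝ) (d : Fin n → Fin n → Fin n → ℝ)
    (u : Fin n → Fin m → ℝ) (e : Fin n → Fin n → Fin m → ℝ) (b : Fin m) (i j : Fin n)
    (hAB : ∀ r s, ∑ t, A r t * B t s = (if r = s then (1:ℝ) else 0))
    (hsymA : ∀ r s, A r s = A s r)
    (hsymd : ∀ k r s, d k r s = d k s r) :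
    ∑ k, (d k i j * u k b + A i k * e j k b + A j k * e i k b)
      = ((∑ s, (d j i s * u s b + A i s * e j s b))
          - ∑ s, (∑ t, A s t * u t b) * ((1/2:ℝ) * ∑ l, B s l * (d j l i + d i l j - d l i j)))
        + ((∑ s, (d i j s * u s b + A j s * e i s b))
          - ∑ s, (∑ t, A s t * u t b) * ((1/2:ℝ) * ∑ l, B s l * (d i l j + d j l i - d l j i))) := by
  have hUG : ∀ (X : Fin n → ℝ),
      ∑ s, (∑ t, A s t * u t b) * ((1/2:ℝ) * ∑ l, B s l * X l)
        = ∑ l, (1/2:ℝ) * (u l b * X l) := by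
    intro X
    calc ∑ s, (∑ t, A s t * u t b) * ((1/2:ℝ) * ∑ l, B s l * X l)
        = ∑ s, ∑ t, ∑ l, (1/2:ℝ) * ((A s t * B s l) * (u t b * X l)) := by
          refine Finset.sum_congr rfl fun s _ => ?_
          rw [Finset.sum_mul]
          refine Finset.sum_congr rfl fun t _ => ?_
          rw [Finset.mul_sum, Finset.mul_sum]
          refine Finset.sum_congr rfl fun l _ => ?_
          ring
      _ = ∑ t, ∑ l, (∑ s, A t s * B s l) * ((1/2:ℝ) * (u t b * X l)) := by
          rw [Finset.sum_comm]
          refine Finset.sum_congr rfl fun t _ => ?_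
          rw [Finset.sum_comm]
          refine Finset.sum_congr rfl fun l _ => ?_
          rw [Finset.sum_mul]
          refine Finset.sum_congr rfl fun s _ => ?_
          rw [hsymA s t]
          ring
      _ = ∑ l, (1/2:ℝ) * (u l b * X l) := by
          simp only [hAB, ite_mul, one_mul, zero_mul]
          refine Finset.sum_congr rfl fun t _ => ?_
          rw [Finset.sum_ite_eq]
          simp
  rw [hUG, hUG, ← Finset.sum_sub_distrib, ← Finset.sum_sub_distrib, ← Finset.sum_add_distrib]
  refine Finset.sum_congr rfl fun k _ => ?_
  rw [hsymd j i k, hsymd i j k, hsymd k j i]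
  ring

lemma alg (h hi : Fin m → Fin m → ℝ)
    (A B : Fin n → Fin n → ℝ) (d dB : Fin n → Fin n → Fin n → ℝ)
    (u : Fin n → Fin m → ℝ) (e : Fin n → Fin n → Fin m → ℝ)
    (p : Fin n → Fin m → ℝ) (a : Fin m) (i j : Fin n)
    (hAB : ∀ r s, ∑ t, A r t * B t s = (if r = s then (1:ℝ) else 0))
    (hh : ∀ c, ∑ b, hi a b * h b c = (if a = c then (1:ℝ) else 0))
    (hsymh : ∀ b c, h b c = h c b)
    (hsymA : ∀ r s, A r s = A s r) (hsymB : ∀ r s, B r s = B s r)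
    (hsymd : ∀ k r s, d k r s = d k s r)
    (hdB : ∀ k r s, dB k r s = -∑ r', ∑ s', B r r' * d k r' s' * B s' s) :
    (1/4 : ℝ) * ∑ b, hi a b * ∑ k,
      (d k i j * ((∑ b', ∑ j', h b b' * B k j' * p j' b')
          + (∑ a', ∑ i', h a' b * B i' k * p i' a') + u k b)
       + A i k * ((∑ b', ∑ j', h b b' * dB j k j' * p j' b')
          + (∑ a', ∑ i', h a' b * dB j i' k * p i' a') + e j k b)
       + A j k * ((∑ b', ∑ j', h b b' * dB i k j' * p j' b')
          + (∑ a', ∑ i', h a' b * dB i i' k * p i' a') + e i k b))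
    = (- ∑ k, ((1/2 : ℝ) * ∑ l, B k l * (d j l i + d i l j - d l i j)) * p k a)
      + (1/4 : ℝ) * ∑ b, hi a b *
        (((∑ s, (d j i s * u s b + A i s * e j s b))
            - ∑ s, (∑ t, A s t * u t b) * ((1/2 : ℝ) * ∑ l, B s l * (d j l i + d i l j - d l i j)))
         + ((∑ s, (d i j s * u s b + A j s * e i s b))
            - ∑ s, (∑ t, A s t * u t b) * ((1/2 : ℝ) * ∑ l, B s l * (d i l j + d j l i - d l j i)))) := by
  have hsymdB : ∀ k r s, dB k r s = dB k s r := by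
    intro k r s
    rw [hdB, hdB, neg_inj, Finset.sum_comm]
    refine Finset.sum_congr rfl fun r' _ => Finset.sum_congr rfl fun s' _ => ?_
    rw [hsymB r s', hsymd k s' r', hsymB r' s]
    ring
  have inner1 : ∀ (b : Fin m) (k : Fin n),
      (∑ b', ∑ j', h b b' * B k j' * p j' b') + (∑ a', ∑ i', h a' b * B i' k * p i' a')
        = 2 * ∑ c, ∑ l, h b c * B k l * p l c := by
    intro b k
    have e2 : (∑ a', ∑ i', h a' b * B i' k * p i' a') = ∑ c, ∑ l, h b c * B k l * p l c :=
      Finset.sum_congr rfl fun c _ => Finset.sum_congr rfl fun l _ => by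
        rw [hsymh c b, hsymB l k]
    rw [e2]
    ring
  have inner2 : ∀ (b : Fin m) (k r : Fin n),
      (∑ b', ∑ j', h b b' * dB r k j' * p j' b') + (∑ a', ∑ i', h a' b * dB r i' k * p i' a')
        = 2 * ∑ c, ∑ l, h b c * dB r k l * p l c := by
    intro b k r
    have e2 : (∑ a', ∑ i', h a' b * dB r i' k * p i' a') = ∑ c, ∑ l, h b c * dB r k l * p l c :=
      Finset.sum_congr rfl fun c _ => Finset.sum_congr rfl fun l _ => by
        rw [hsymh c b, hsymdB r l k]
    rw [e2]
    ring
  have hbr : ∀ (b : Fin m) (k : Fin n),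
      (d k i j * ((∑ b', ∑ j', h b b' * B k j' * p j' b')
          + (∑ a', ∑ i', h a' b * B i' k * p i' a') + u k b)
       + A i k * ((∑ b', ∑ j', h b b' * dB j k j' * p j' b')
          + (∑ a', ∑ i', h a' b * dB j i' k * p i' a') + e j k b)
       + A j k * ((∑ b', ∑ j', h b b' * dB i k j' * p j' b')
          + (∑ a', ∑ i', h a' b * dB i i' k * p i' a') + e i k b))
      = 2 * (d k i j * ∑ c, ∑ l, h b c * B k l * p l c
          + A i k * ∑ c, ∑ l, h b c * dB j k l * p l c
          + A j k * ∑ c, ∑ l, h b c * dB i k l * p l c)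
        + (d k i j * u k b + A i k * e j k b + A j k * e i k b) := by
    intro b k
    rw [show (∑ b', ∑ j', h b b' * B k j' * p j' b')
          + (∑ a', ∑ i', h a' b * B i' k * p i' a') + u k b
        = 2 * (∑ c, ∑ l, h b c * B k l * p l c) + u k b by rw [← inner1 b k],
      show (∑ b', ∑ j', h b b' * dB j k j' * p j' b')
          + (∑ a', ∑ i', h a' b * dB j i' k * p i' a') + e j k b
        = 2 * (∑ c, ∑ l, h b c * dB j k l * p l c) + e j k b by rw [← inner2 b k j],
      show (∑ b', ∑ j', h b b' * dB i k j' * p j' b')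
          + (∑ a', ∑ i', h a' b * dB i i' k * p i' a') + e i k b
        = 2 * (∑ c, ∑ l, h b c * dB i k l * p l c) + e i k b by rw [← inner2 b k i]]
    ring
  have hsplit : ∀ b : Fin m, (∑ k,
      (d k i j * ((∑ b', ∑ j', h b b' * B k j' * p j' b')
          + (∑ a', ∑ i', h a' b * B i' k * p i' a') + u k b)
       + A i k * ((∑ b', ∑ j', h b b' * dB j k j' * p j' b')
          + (∑ a', ∑ i', h a' b * dB j i' k * p i' a') + e j k b)
       + A j k * ((∑ b', ∑ j', h b b' * dB i k j' * p j' b')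
          + (∑ a', ∑ i', h a' b * dB i i' k * p i' a') + e i k b)))
      = 2 * (∑ k, (d k i j * ∑ c, ∑ l, h b c * B k l * p l c
          + A i k * ∑ c, ∑ l, h b c * dB j k l * p l c
          + A j k * ∑ c, ∑ l, h b c * dB i k l * p l c))
        + ∑ k, (d k i j * u k b + A i k * e j k b + A j k * e i k b) := by
    intro b
    rw [Finset.sum_congr rfl fun k _ => hbr b k, Finset.sum_add_distrib, Finset.mul_sum]
  have hQw : ∀ b : Fin m, (∑ k, (d k i j * ∑ c, ∑ l, h b c * B k l * p l c
          + A i k * ∑ c, ∑ l, h b c * dB j k l * p l c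
          + A j k * ∑ c, ∑ l, h b c * dB i k l * p l c))
      = ∑ c, h b c * (∑ k, ∑ l,
          ((d k i j * B k l + A i k * dB j k l + A j k * dB i k l) * p l c)) := by
    intro b
    calc (∑ k, (d k i j * ∑ c, ∑ l, h b c * B k l * p l c
          + A i k * ∑ c, ∑ l, h b c * dB j k l * p l c
          + A j k * ∑ c, ∑ l, h b c * dB i k l * p l c))
        = ∑ k, ∑ c, ∑ l, h b c * ((d k i j * B k l + A i k * dB j k l + A j k * dB i k l)
            * p l c) := by
          refine Finset.sum_congr rfl fun k _ => ?_
          rw [Finset.mul_sum, Finset.mul_sum, Finset.mul_sum, ← Finset.sum_add_distrib,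
            ← Finset.sum_add_distrib]
          refine Finset.sum_congr rfl fun c _ => ?_
          rw [Finset.mul_sum, Finset.mul_sum, Finset.mul_sum, ← Finset.sum_add_distrib,
            ← Finset.sum_add_distrib]
          refine Finset.sum_congr rfl fun l _ => ?_
          ring
      _ = ∑ c, h b c * (∑ k, ∑ l,
            ((d k i j * B k l + A i k * dB j k l + A j k * dB i k l) * p l c)) := by
          rw [Finset.sum_comm]
          refine Finset.sum_congr rfl fun c _ => ?_
          rw [Finset.mul_sum]
          refine Finset.sum_congr rfl fun k _ => ?_
          rw [Finset.mul_sum]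
  calc (1/4 : ℝ) * ∑ b, hi a b * ∑ k,
      (d k i j * ((∑ b', ∑ j', h b b' * B k j' * p j' b')
          + (∑ a', ∑ i', h a' b * B i' k * p i' a') + u k b)
       + A i k * ((∑ b', ∑ j', h b b' * dB j k j' * p j' b')
          + (∑ a', ∑ i', h a' b * dB j i' k * p i' a') + e j k b)
       + A j k * ((∑ b', ∑ j', h b b' * dB i k j' * p j' b')
          + (∑ a', ∑ i', h a' b * dB i i' k * p i' a') + e i k b))
      = (1/4 : ℝ) * ∑ b, (2 * (hi a b * ∑ c, h b c * (∑ k, ∑ l,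
            ((d k i j * B k l + A i k * dB j k l + A j k * dB i k l) * p l c)))
          + hi a b * ∑ k, (d k i j * u k b + A i k * e j k b + A j k * e i k b)) := by
        refine congrArg _ (Finset.sum_congr rfl fun b _ => ?_)
        rw [hsplit b, hQw b]
        ring
    _ = (1/2 : ℝ) * (∑ b, hi a b * ∑ c, h b c * (∑ k, ∑ l,
            ((d k i j * B k l + A i k * dB j k l + A j k * dB i k l) * p l c)))
        + (1/4 : ℝ) * ∑ b, hi a b * ∑ k,
            (d k i j * u k b + A i k * e j k b + A j k * e i k b) := by
        rw [Finset.sum_add_distrib, ← Finset.mul_sum]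
        ring
    _ = (- ∑ k, ((1/2 : ℝ) * ∑ l, B k l * (d j l i + d i l j - d l i j)) * p k a)
        + (1/4 : ℝ) * ∑ b, hi a b *
          (((∑ s, (d j i s * u s b + A i s * e j s b))
              - ∑ s, (∑ t, A s t * u t b)
                * ((1/2 : ℝ) * ∑ l, B s l * (d j l i + d i l j - d l i j)))
           + ((∑ s, (d i j s * u s b + A j s * e i s b))
              - ∑ s, (∑ t, A s t * u t b)
                * ((1/2 : ℝ) * ∑ l, B s l * (d i l j + d j l i - d l j i)))) := by
        rw [hcol h hi a hh, algQuad A B d dB p a i j hAB hsymB hsymd hdB]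
        refine congrArg _ (congrArg _ (Finset.sum_congr rfl fun b _ => ?_))
        rw [algLin A B d u e b i j hAB hsymA hsymd]

end Alg

/-- for the non-autonomous electrodynamics Hamiltonian
`H = h_{ab} g^{ij} p_i^a p_j^b + U^{(i)}_{(a)} p_i^a + F` (with `g` independent
of the momenta), the general formula for the spatial nonlinear connection
`N^{(a)}_{(i)j}` evaluates to `−Γ^k_{ij} p_k^a + T^{(a)}_{(i)j}`. -/
theorem stmt11 (m n : ℕ) (hm : 0 < m) (hn : 0 < n)
    (h : Matrix (Fin m) (Fin m) ℝ) (hhsym : h.IsSymm) (hhinv : IsUnit h.det)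
    (g : (Fin n → ℝ) → Matrix (Fin n) (Fin n) ℝ)
    (hg : ∀ i j, ContDiff ℝ (⊤ : ℕ∞) (fun x => g x i j))
    (hgsym : ∀ x, (g x).IsSymm) (hginv : ∀ x, IsUnit (g x).det)
    (U : (Fin n → ℝ) → Fin n → Fin m → ℝ)
    (hU : ∀ i a, ContDiff ℝ (⊤ : ℕ∞) (fun x => U x i a))
    (F : (Fin n → ℝ) → ℝ) (hF : ContDiff ℝ (⊤ : ℕ∞) F)
    (H : (Fin n → ℝ) × (Fin n → Fin m → ℝ) → ℝ)
    (hH : ∀ q, H q = (∑ a, ∑ b, ∑ i, ∑ j, h a b * (g q.1)⁻¹ i j * q.2 i a * q.2 j b)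
      + (∑ i, ∑ a, U q.1 i a * q.2 i a) + F q.1)
    (Γ : (Fin n → ℝ) → Fin n → Fin n → Fin n → ℝ)
    (hΓ : ∀ x k i j, Γ x k i j = (1/2 : ℝ) * ∑ l, (g x)⁻¹ k l *
      (fderiv ℝ (fun y => g y l i) x (Pi.single j 1)
       + fderiv ℝ (fun y => g y l j) x (Pi.single i 1)
       - fderiv ℝ (fun y => g y i j) x (Pi.single l 1)))
    (Ulow : (Fin n → ℝ) → Fin n → Fin m → ℝ)
    (hUlow : ∀ x k b, Ulow x k b = ∑ s, g x k s * U x s b)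
    (Ucov : (Fin n → ℝ) → Fin n → Fin m → Fin n → ℝ)
    (hUcov : ∀ x k b r, Ucov x k b r =
      fderiv ℝ (fun y => Ulow y k b) x (Pi.single r 1) - ∑ s, Ulow x s b * Γ x s k r)
    (T : (Fin n → ℝ) → Fin m → Fin n → Fin n → ℝ)
    (hT : ∀ x a i j, T x a i j = (1/4 : ℝ) * ∑ b, h⁻¹ a b * (Ucov x i b j + Ucov x j b i))
    (x : Fin n → ℝ) (p : Fin n → Fin m → ℝ) (a : Fin m) (i j : Fin n) :
    (1/4 : ℝ) * ∑ b, h⁻¹ a b * ∑ k,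
      (fderiv ℝ (fun y => g y i j) x (Pi.single k 1)
          * fderiv ℝ H (x, p) (0, Pi.single k (Pi.single b 1))
       - fderiv ℝ (fun q : (Fin n → ℝ) × (Fin n → Fin m → ℝ) => g q.1 i j) (x, p)
            (0, Pi.single k (Pi.single b 1))
          * fderiv ℝ H (x, p) (Pi.single k 1, 0)
       + g x i k * fderiv ℝ (fun q => fderiv ℝ H q (0, Pi.single k (Pi.single b 1)))
            (x, p) (Pi.single j 1, 0)
       + g x j k * fderiv ℝ (fun q => fderiv ℝ H q (0, Pi.single k (Pi.single b 1)))
            (x, p) (Pi.single i 1, 0))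
    = (- ∑ k, Γ x k i j * p k a) + T x a i j := by
  have hgd : ∀ (x' : Fin n → ℝ) (r s : Fin n), DifferentiableAt ℝ (fun y => g y r s) x' :=
    fun x' r s => ((hg r s).differentiable (by simp)).differentiableAt
  have hUd : ∀ (r : Fin n) (s : Fin m), DifferentiableAt ℝ (fun y => U y r s) x :=
    fun r s => ((hU r s).differentiable (by simp)).differentiableAt
  -- symmetry facts
  have hsymh : ∀ b c, h b c = h c b := fun b c => hhsym.apply c b
  have hsymA : ∀ r s, g x r s = g x s r := fun r s => (hgsym x).apply s r
  have hsymBmat : ((g x)⁻¹).IsSymm := by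
    unfold Matrix.IsSymm
    rw [Matrix.transpose_nonsing_inv, (hgsym x).eq]
  have hsymB : ∀ r s, (g x)⁻¹ r s = (g x)⁻¹ s r := fun r s => hsymBmat.apply s r
  have hsymd : ∀ (k r s : Fin n), fderiv ℝ (fun y => g y r s) x (Pi.single k 1)
      = fderiv ℝ (fun y => g y s r) x (Pi.single k 1) := by
    intro k r s
    have : (fun y => g y r s) = fun y => g y s r := funext fun y => (hgsym y).apply s r
    rw [this]
  -- delta relations
  have hAB : ∀ r s, ∑ t, g x r t * (g x)⁻¹ t s = (if r = s then (1:ℝ) else 0) := by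
    intro r s
    rw [← Matrix.mul_apply, Matrix.mul_nonsing_inv _ (hginv x), Matrix.one_apply]
  have hh' : ∀ c, ∑ b, h⁻¹ a b * h b c = (if a = c then (1:ℝ) else 0) := by
    intro c
    rw [← Matrix.mul_apply, Matrix.nonsing_inv_mul _ hhinv, Matrix.one_apply]
  -- derivative of inverse
  have hdB : ∀ (k r s : Fin n), fderiv ℝ (fun y => (g y)⁻¹ r s) x (Pi.single k 1)
      = -∑ r', ∑ s', (g x)⁻¹ r r' * fderiv ℝ (fun y => g y r' s') x (Pi.single k 1)
          * (g x)⁻¹ s' s :=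
    fun k r s => fderiv_ginv' g hg hginv x (Pi.single k 1) r s
  -- the zero term
  have hz : ∀ (k : Fin n) (b' : Fin m),
      fderiv ℝ (fun q : (Fin n → ℝ) × (Fin n → Fin m → ℝ) => g q.1 i j) (x, p)
        (0, Pi.single k (Pi.single b' 1)) = 0 := by
    intro k b'
    rw [fdA (hgd x i j) ((0, Pi.single k (Pi.single b' 1)) :
      (Fin n → ℝ) × (Fin n → Fin m → ℝ))]
    simp
  -- derivative of Ulow
  have hDU : ∀ (kk : Fin n) (bb : Fin m) (rr : Fin n),
      fderiv ℝ (fun y => Ulow y kk bb) x (Pi.single rr 1)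
        = ∑ s, (fderiv ℝ (fun y => g y kk s) x (Pi.single rr 1) * U x s bb
            + g x kk s * fderiv ℝ (fun y => U y s bb) x (Pi.single rr 1)) := by
    intro kk bb rr
    have hfe : (fun y => Ulow y kk bb) = fun y => ∑ s, g y kk s * U y s bb :=
      funext fun y => hUlow y kk bb
    rw [hfe, fderiv_sum_app fun s => (hgd x kk s).fun_mul (hUd s bb)]
    exact Finset.sum_congr rfl fun s _ => fderiv_mul_apply'' (hgd x kk s) (hUd s bb)
  calc (1/4 : ℝ) * ∑ b, h⁻¹ a b * ∑ k,
      (fderiv ℝ (fun y => g y i j) x (Pi.single k 1)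
          * fderiv ℝ H (x, p) (0, Pi.single k (Pi.single b 1))
       - fderiv ℝ (fun q : (Fin n → ℝ) × (Fin n → Fin m → ℝ) => g q.1 i j) (x, p)
            (0, Pi.single k (Pi.single b 1))
          * fderiv ℝ H (x, p) (Pi.single k 1, 0)
       + g x i k * fderiv ℝ (fun q => fderiv ℝ H q (0, Pi.single k (Pi.single b 1)))
            (x, p) (Pi.single j 1, 0)
       + g x j k * fderiv ℝ (fun q => fderiv ℝ H q (0, Pi.single k (Pi.single b 1)))
            (x, p) (Pi.single i 1, 0))
      = (1/4 : ℝ) * ∑ b, h⁻¹ a b * ∑ k,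
        (fderiv ℝ (fun y => g y i j) x (Pi.single k 1)
            * ((∑ b', ∑ j', h b b' * (g x)⁻¹ k j' * p j' b')
              + (∑ a', ∑ i', h a' b * (g x)⁻¹ i' k * p i' a') + U x k b)
         + g x i k * ((∑ b', ∑ j', h b b'
              * fderiv ℝ (fun y => (g y)⁻¹ k j') x (Pi.single j 1) * p j' b')
            + (∑ a', ∑ i', h a' b
              * fderiv ℝ (fun y => (g y)⁻¹ i' k) x (Pi.single j 1) * p i' a')
            + fderiv ℝ (fun y => U y k b) x (Pi.single j 1))
         + g x j k * ((∑ b', ∑ j', h b b'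
              * fderiv ℝ (fun y => (g y)⁻¹ k j') x (Pi.single i 1) * p j' b')
            + (∑ a', ∑ i', h a' b
              * fderiv ℝ (fun y => (g y)⁻¹ i' k) x (Pi.single i 1) * p i' a')
            + fderiv ℝ (fun y => U y k b) x (Pi.single i 1))) := by
        refine congrArg _ (Finset.sum_congr rfl fun b _ =>
          congrArg _ (Finset.sum_congr rfl fun k _ => ?_))
        rw [DHp h g hg hginv U hU F hF H hH x p k b,
          DHxp h g hg hginv U hU F hF H hH x p k b (Pi.single j 1),
          DHxp h g hg hginv U hU F hF H hH x p k b (Pi.single i 1),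
          hz k b, zero_mul, sub_zero]
    _ = (- ∑ k, ((1/2 : ℝ) * ∑ l, (g x)⁻¹ k l *
          (fderiv ℝ (fun y => g y l i) x (Pi.single j 1)
           + fderiv ℝ (fun y => g y l j) x (Pi.single i 1)
           - fderiv ℝ (fun y => g y i j) x (Pi.single l 1))) * p k a)
        + (1/4 : ℝ) * ∑ b, h⁻¹ a b *
          (((∑ s, (fderiv ℝ (fun y => g y i s) x (Pi.single j 1) * U x s b
              + g x i s * fderiv ℝ (fun y => U y s b) x (Pi.single j 1)))
            - ∑ s, (∑ t, g x s t * U x t b) * ((1/2 : ℝ) * ∑ l, (g x)⁻¹ s l *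
              (fderiv ℝ (fun y => g y l i) x (Pi.single j 1)
               + fderiv ℝ (fun y => g y l j) x (Pi.single i 1)
               - fderiv ℝ (fun y => g y i j) x (Pi.single l 1))))
           + ((∑ s, (fderiv ℝ (fun y => g y j s) x (Pi.single i 1) * U x s b
              + g x j s * fderiv ℝ (fun y => U y s b) x (Pi.single i 1)))
            - ∑ s, (∑ t, g x s t * U x t b) * ((1/2 : ℝ) * ∑ l, (g x)⁻¹ s l *
              (fderiv ℝ (fun y => g y l j) x (Pi.single i 1)
               + fderiv ℝ (fun y => g y l i) x (Pi.single j 1)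
               - fderiv ℝ (fun y => g y j i) x (Pi.single l 1))))) := by
        exact alg h (fun a' b' => h⁻¹ a' b') (g x) (fun r s => (g x)⁻¹ r s)
          (fun k r s => fderiv ℝ (fun y => g y r s) x (Pi.single k 1))
          (fun k r s => fderiv ℝ (fun y => (g y)⁻¹ r s) x (Pi.single k 1))
          (U x) (fun r s b' => fderiv ℝ (fun y => U y s b') x (Pi.single r 1))
          p a i j hAB hh' hsymh hsymA hsymB hsymd hdB
    _ = (- ∑ k, Γ x k i j * p k a) + T x a i j := by
        rw [hT x a i j]
        congr 1
        · refine congrArg Neg.neg (Finset.sum_congr rfl fun k _ => ?_)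
          rw [hΓ x k i j]
        · refine congrArg _ (Finset.sum_congr rfl fun b _ => congrArg _ ?_)
          rw [hUcov x i b j, hUcov x j b i, hDU i b j, hDU j b i]
          congr 1
          · congr 1
            refine Finset.sum_congr rfl fun s _ => ?_
            rw [hUlow x s b, hΓ x s i j]
          · congr 1
            refine Finset.sum_congr rfl fun s _ => ?_
            rw [hUlow x s b, hΓ x s j i]
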